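/- (Theorem B, immersion part.) Let Γ : I → ℝ^{2,3} be a biisotropic curve on an open interval I and R an isotropic normal vector field along Γ. Define T : I × ℝ → ℝ^{2,3} by T(τ,θ) = cos θ · R(τ) + (1/2) sin θ · Γ′(τ). Then: (i) T(τ,θ) ≠ 0 for all (τ,θ); (ii) ⟨T,T⟩ ≡ 0 (T takes values in the null cone); (iii) ⟨T, Γ(τ)⟩ ≡ 0, ⟨∂T/∂τ, Γ(τ)⟩ ≡ 0 and ⟨∂T/∂θ, Γ(τ)⟩ ≡ 0 (the tube is enveloped by the walls determined by Γ); (iv) ⟨∂T/∂θ, ∂T/∂θ⟩ ≡ 0 and ⟨∂T/∂θ, ∂T/∂τ⟩ ≡ −1/2, so that the Gram determinant ⟨∂T/∂τ,∂T/∂τ⟩⟨∂T/∂θ,∂T/∂θ⟩ − ⟨∂T/∂τ,∂T/∂θ⟩² equals −1/4 everywhere; in particular ∂T/∂τ and ∂T/∂θ are linearly independent at every point and the induced metric is Lorentzian (T is the lift of a timelike immersion of the normal tube of Γ into the Einstein universe). -/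

import Mathlib

/-- The signature `(2,3)` bilinear form on `ℝ⁵`. -/
noncomputable def ip (X Y : Fin 5 → ℝ) : ℝ :=
  -(X 0 * Y 4 + X 4 * Y 0) - X 1 * Y 1 + X 2 * Y 2 + X 3 * Y 3

/-- The lift `T(τ,θ) = cos θ · R(τ) + (1/2) sin θ · Γ′(τ)` of the tautological map
of the normal tube of `Γ`. -/
noncomputable def tubeLift (Γ R : ℝ → Fin 5 → ℝ) (τ θ : ℝ) : Fin 5 → ℝ :=
  Real.cos θ • R τ + ((1 / 2) * Real.sin θ) • deriv Γ τ

lemma ip_symm (X Y : Fin 5 → ℝ) : ip X Y = ip Y X := by unfold ip; ring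

lemma ip_zero_left (Y : Fin 5 → ℝ) : ip 0 Y = 0 := by simp [ip]

lemma ip_comb (c d e f : ℝ) (x y z w : Fin 5 → ℝ) :
    ip (c • x + d • y) (e • z + f • w) =
      c * e * ip x z + c * f * ip x w + d * e * ip y z + d * f * ip y w := by
  simp [ip, Pi.add_apply, Pi.smul_apply, smul_eq_mul]; ring

lemma ip_comb_left (c d : ℝ) (x y z : Fin 5 → ℝ) :
    ip (c • x + d • y) z = c * ip x z + d * ip y z := by
  simp [ip, Pi.add_apply, Pi.smul_apply, smul_eq_mul]; ring

lemma hasDerivAt_ip {X Y : ℝ → Fin 5 → ℝ} {X' Y' : Fin 5 → ℝ} {τ : ℝ}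
    (hX : HasDerivAt X X' τ) (hY : HasDerivAt Y Y' τ) :
    HasDerivAt (fun t => ip (X t) (Y t)) (ip X' (Y τ) + ip (X τ) Y') τ := by
  have hx := hasDerivAt_pi.1 hX
  have hy := hasDerivAt_pi.1 hY
  have D : HasDerivAt
      (fun t => -(X t 0 * Y t 4 + X t 4 * Y t 0) - X t 1 * Y t 1 + X t 2 * Y t 2 + X t 3 * Y t 3)
      (-((X' 0 * Y τ 4 + X τ 0 * Y' 4) + (X' 4 * Y τ 0 + X τ 4 * Y' 0))
        - (X' 1 * Y τ 1 + X τ 1 * Y' 1) + (X' 2 * Y τ 2 + X τ 2 * Y' 2)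
        + (X' 3 * Y τ 3 + X τ 3 * Y' 3)) τ :=
    (((((hx 0).mul (hy 4)).add ((hx 4).mul (hy 0))).neg.sub ((hx 1).mul (hy 1))).add
      ((hx 2).mul (hy 2))).add ((hx 3).mul (hy 3))
  have heq : ip X' (Y τ) + ip (X τ) Y' =
      (-((X' 0 * Y τ 4 + X τ 0 * Y' 4) + (X' 4 * Y τ 0 + X τ 4 * Y' 0))
        - (X' 1 * Y τ 1 + X τ 1 * Y' 1) + (X' 2 * Y τ 2 + X τ 2 * Y' 2)
        + (X' 3 * Y τ 3 + X τ 3 * Y' 3)) := by unfold ip; ring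
  rw [heq]
  exact D

lemma deriv_zero_of_const {f : ℝ → ℝ} {a b τ d c : ℝ} (hf : HasDerivAt f d τ)
    (hτ : τ ∈ Set.Ioo a b) (h : ∀ t ∈ Set.Ioo a b, f t = c) : d = 0 := by
  have h1 : f =ᶠ[nhds τ] fun _ => c :=
    Filter.eventuallyEq_of_mem (isOpen_Ioo.mem_nhds hτ) h
  exact hf.unique ((hasDerivAt_const τ c).congr_of_eventuallyEq h1)

/-- Theorem B, immersion part: for a biisotropic `Γ` with isotropic
normal field `R`, the lift `T` of the tautological map of the normal tube satisfies
(i) `T ≠ 0`; (ii) `⟨T,T⟩ = 0`; (iii) `⟨T,Γ⟩ = ⟨∂T/∂τ,Γ⟩ = ⟨∂T/∂θ,Γ⟩ = 0`;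
(iv) `⟨∂T/∂θ,∂T/∂θ⟩ = 0`, `⟨∂T/∂θ,∂T/∂τ⟩ = −1/2`, the Gram determinant equals `−1/4`,
and `∂T/∂τ`, `∂T/∂θ` are linearly independent. -/
theorem stmt5 (a b : ℝ) (Γ R : ℝ → Fin 5 → ℝ)
    (hΓ : ContDiff ℝ (⊤ : ℕ∞) Γ) (hR : ContDiff ℝ (⊤ : ℕ∞) R)
    -- `Γ` is biisotropic
    (h1 : ∀ τ ∈ Set.Ioo a b, ip (Γ τ) (Γ τ) = 1)
    (h2 : ∀ τ ∈ Set.Ioo a b, ip (deriv Γ τ) (deriv Γ τ) = 0)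
    (h3 : ∀ τ ∈ Set.Ioo a b, ip (deriv (deriv Γ) τ) (deriv (deriv Γ) τ) = 0)
    (h4 : ∀ τ ∈ Set.Ioo a b, LinearIndependent ℝ ![deriv Γ τ, deriv (deriv Γ) τ])
    -- `R` is an isotropic normal vector field along `Γ`
    (hR1 : ∀ τ ∈ Set.Ioo a b, ip (R τ) (R τ) = 0)
    (hR2 : ∀ τ ∈ Set.Ioo a b, ip (R τ) (Γ τ) = 0)
    (hR3 : ∀ τ ∈ Set.Ioo a b, ip (R τ) (deriv Γ τ) = 0)
    (hR4 : ∀ τ ∈ Set.Ioo a b, ip (R τ) (deriv (deriv Γ) τ) = 1) :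
    ∀ τ ∈ Set.Ioo a b, ∀ θ : ℝ,
      -- (i)
      tubeLift Γ R τ θ ≠ 0 ∧
      -- (ii)
      ip (tubeLift Γ R τ θ) (tubeLift Γ R τ θ) = 0 ∧
      -- (iii)
      ip (tubeLift Γ R τ θ) (Γ τ) = 0 ∧
      ip (deriv (fun t => tubeLift Γ R t θ) τ) (Γ τ) = 0 ∧
      ip (deriv (fun p => tubeLift Γ R τ p) θ) (Γ τ) = 0 ∧
      -- (iv)
      ip (deriv (fun p => tubeLift Γ R τ p) θ) (deriv (fun p => tubeLift Γ R τ p) θ) = 0 ∧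
      ip (deriv (fun p => tubeLift Γ R τ p) θ) (deriv (fun t => tubeLift Γ R t θ) τ) = -(1 / 2) ∧
      ip (deriv (fun t => tubeLift Γ R t θ) τ) (deriv (fun t => tubeLift Γ R t θ) τ) *
          ip (deriv (fun p => tubeLift Γ R τ p) θ) (deriv (fun p => tubeLift Γ R τ p) θ) -
        (ip (deriv (fun t => tubeLift Γ R t θ) τ) (deriv (fun p => tubeLift Γ R τ p) θ)) ^ 2 =
          -(1 / 4) ∧
      LinearIndependent ℝ
        ![deriv (fun t => tubeLift Γ R t θ) τ, deriv (fun p => tubeLift Γ R τ p) θ] := by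
  intro τ hτ θ
  have hΓd : Differentiable ℝ Γ := hΓ.differentiable (by simp)
  have hΓ'c : ContDiff ℝ (⊤:ℕ∞) (deriv Γ) := (contDiff_infty_iff_deriv.mp (hΓ.of_le (by simp))).2
  have hΓ'd : Differentiable ℝ (deriv Γ) := (contDiff_infty_iff_deriv.mp hΓ'c).1
  have hRd : Differentiable ℝ R := hR.differentiable (by simp)
  -- derived identities
  have e1 : ∀ t ∈ Set.Ioo a b, ip (deriv Γ t) (Γ t) = 0 := by
    intro t ht
    have hd := hasDerivAt_ip (hΓd t).hasDerivAt (hΓd t).hasDerivAt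
    have h0 := deriv_zero_of_const hd ht h1
    have hs := ip_symm (deriv Γ t) (Γ t)
    have hs2 := ip_symm (Γ t) (deriv Γ t)
    linarith
  have e2 : ip (deriv (deriv Γ) τ) (Γ τ) = 0 := by
    have hd := hasDerivAt_ip (hΓ'd τ).hasDerivAt (hΓd τ).hasDerivAt
    have h0 := deriv_zero_of_const hd hτ e1
    have := h2 τ hτ
    linarith
  have e3 : ip (deriv (deriv Γ) τ) (deriv Γ τ) = 0 := by
    have hd := hasDerivAt_ip (hΓ'd τ).hasDerivAt (hΓ'd τ).hasDerivAt
    have h0 := deriv_zero_of_const hd hτ h2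
    have hs := ip_symm (deriv (deriv Γ) τ) (deriv Γ τ)
    have hs2 := ip_symm (deriv Γ τ) (deriv (deriv Γ) τ)
    linarith
  have e4 : ip (deriv R τ) (R τ) = 0 := by
    have hd := hasDerivAt_ip (hRd τ).hasDerivAt (hRd τ).hasDerivAt
    have h0 := deriv_zero_of_const hd hτ hR1
    have hs := ip_symm (deriv R τ) (R τ)
    have hs2 := ip_symm (R τ) (deriv R τ)
    linarith
  have e5 : ip (deriv R τ) (Γ τ) = 0 := by
    have hd := hasDerivAt_ip (hRd τ).hasDerivAt (hΓd τ).hasDerivAt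
    have h0 := deriv_zero_of_const hd hτ hR2
    have := hR3 τ hτ
    linarith
  have e6 : ip (deriv R τ) (deriv Γ τ) = -1 := by
    have hd := hasDerivAt_ip (hRd τ).hasDerivAt (hΓ'd τ).hasDerivAt
    have h0 := deriv_zero_of_const hd hτ hR3
    have := hR4 τ hτ
    linarith
  -- derivatives of the tube lift
  have hTτ : deriv (fun t => tubeLift Γ R t θ) τ =
      Real.cos θ • deriv R τ + ((1 / 2) * Real.sin θ) • deriv (deriv Γ) τ := by
    have hd : HasDerivAt (fun t => tubeLift Γ R t θ)
        (Real.cos θ • deriv R τ + ((1 / 2) * Real.sin θ) • deriv (deriv Γ) τ) τ := by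
      unfold tubeLift
      exact ((hRd τ).hasDerivAt.const_smul (Real.cos θ)).add
        ((hΓ'd τ).hasDerivAt.const_smul ((1 / 2) * Real.sin θ))
    exact hd.deriv
  have hTθ : deriv (fun p => tubeLift Γ R τ p) θ =
      (-Real.sin θ) • R τ + ((1 / 2) * Real.cos θ) • deriv Γ τ := by
    have hd : HasDerivAt (fun p => tubeLift Γ R τ p)
        ((-Real.sin θ) • R τ + ((1 / 2) * Real.cos θ) • deriv Γ τ) θ := by
      unfold tubeLift
      have h1' := (Real.hasDerivAt_cos θ).smul_const (R τ)
      have h2' := ((Real.hasDerivAt_sin θ).const_mul ((1:ℝ) / 2)).smul_const (deriv Γ τ)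
      exact h1'.add h2'
    exact hd.deriv
  have hTdef : tubeLift Γ R τ θ =
      Real.cos θ • R τ + ((1 / 2) * Real.sin θ) • deriv Γ τ := rfl
  -- abbreviations for known products
  have hrr := hR1 τ hτ
  have hrg1 := hR3 τ hτ
  have hg1r : ip (deriv Γ τ) (R τ) = 0 := by rw [ip_symm]; exact hrg1
  have hg1g1 := h2 τ hτ
  have hrg2 := hR4 τ hτ
  have hg1g2 : ip (deriv Γ τ) (deriv (deriv Γ) τ) = 0 := by rw [ip_symm]; exact e3
  have hrr' : ip (R τ) (deriv R τ) = 0 := by rw [ip_symm]; exact e4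
  have hg1r' : ip (deriv Γ τ) (deriv R τ) = -1 := by rw [ip_symm]; exact e6
  have hrΓ := hR2 τ hτ
  have hg1Γ := e1 τ hτ
  have hsc := Real.sin_sq_add_cos_sq θ
  have hg1ne : deriv Γ τ ≠ 0 := (h4 τ hτ).ne_zero 0
  rw [hTτ, hTθ, hTdef]
  refine ⟨?_, ?_, ?_, ?_, ?_, ?_, ?_, ?_, ?_⟩
  · -- (i)
    intro hT0
    have h0 : ip (Real.cos θ • R τ + ((1 / 2) * Real.sin θ) • deriv Γ τ)
        (deriv (deriv Γ) τ) = 0 := by rw [hT0]; exact ip_zero_left _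
    rw [ip_comb_left, hrg2, hg1g2] at h0
    have hc : Real.cos θ = 0 := by linarith
    have hs : Real.sin θ ≠ 0 := by
      intro h; rw [h, hc] at hsc; norm_num at hsc
    rw [hc] at hT0
    have : ((1 / 2) * Real.sin θ) • deriv Γ τ = 0 := by
      simpa using hT0
    rcases smul_eq_zero.mp this with h | h
    · exact hs (by linarith [h]; ) |>.elim
    · exact hg1ne h
  · rw [ip_comb, hrr, hrg1, hg1r, hg1g1]; ring
  · rw [ip_comb_left, hrΓ, hg1Γ]; ring
  · rw [ip_comb_left, e5, e2]; ring
  · rw [ip_comb_left, hrΓ, hg1Γ]; ring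
  · rw [ip_comb, hrr, hrg1, hg1r, hg1g1]; ring
  · rw [ip_comb, hrr', hrg2, hg1r', hg1g2]; nlinarith [hsc]
  · have hvv : ip ((-Real.sin θ) • R τ + ((1 / 2) * Real.cos θ) • deriv Γ τ)
        ((-Real.sin θ) • R τ + ((1 / 2) * Real.cos θ) • deriv Γ τ) = 0 := by
      rw [ip_comb, hrr, hrg1, hg1r, hg1g1]; ring
    have huv : ip (Real.cos θ • deriv R τ + ((1 / 2) * Real.sin θ) • deriv (deriv Γ) τ)
        ((-Real.sin θ) • R τ + ((1 / 2) * Real.cos θ) • deriv Γ τ) = -(1 / 2) := by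
      rw [ip_symm, ip_comb, hrr', hrg2, hg1r', hg1g2]; nlinarith [hsc]
    rw [hvv, huv]; ring
  · -- linear independence
    have huv : ip ((-Real.sin θ) • R τ + ((1 / 2) * Real.cos θ) • deriv Γ τ)
        (Real.cos θ • deriv R τ + ((1 / 2) * Real.sin θ) • deriv (deriv Γ) τ) = -(1 / 2) := by
      rw [ip_comb, hrr', hrg2, hg1r', hg1g2]; nlinarith [hsc]
    set u := Real.cos θ • deriv R τ + ((1 / 2) * Real.sin θ) • deriv (deriv Γ) τ with hu
    set v := (-Real.sin θ) • R τ + ((1 / 2) * Real.cos θ) • deriv Γ τ with hv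
    have hvv : ip v v = 0 := by
      rw [hv, ip_comb, hrr, hrg1, hg1r, hg1g1]; ring
    have hvne : v ≠ 0 := by
      intro h; rw [h, ip_zero_left] at huv; norm_num at huv
    rw [LinearIndependent.pair_iff]
    intro s t hst
    have h0 : ip (s • u + t • v) v = 0 := by rw [hst]; exact ip_zero_left _
    have huv' : ip u v = -(1 / 2) := by rw [ip_symm]; exact huv
    rw [ip_comb_left] at h0
    simp only [huv', hvv, smul_eq_mul] at h0
    have hs0 : s = 0 := by linarith
    refine ⟨hs0, ?_⟩
    rw [hs0, zero_smul, zero_add] at hst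
    rcases smul_eq_zero.mp hst with h | h
    · exact h
    · exact (hvne h).elim
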